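/- arXiv:2011.05981 — 3 statements merged into one kernel-verified Lean document; each statement's English description precedes it below -/
import Mathlib

section
/- Let (W,σ) be a finite-dimensional real symplectic vector space and S : W → W a linear isomorphism. Then S^σ = S if and only if there exists a linear isomorphism φ : W → W such that S = φ^σ ∘ φ. -/
/-!
If `S` is `σ`-self-adjoint, then `σ_S(ξ, η) = σ(ξ, S η)` is again a symplectic form. Any two
symplectic forms on `W` are isometric: split off a pair with `σ ξ η = 1`, whose `σ`-orthogonal
complement carries a symplectic form of dimension two less, and induct. An isometry
`φ : (W, σ_S) ≃ (W, σ)` then makes `φ^σ ∘ φ` a left adjoint of `S`, as is `S` itself, so the two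
agree by nondegeneracy. Conversely `φ^σ ∘ φ` is self-adjoint because for an alternating form
`(φ^σ)^σ = φ`.
-/

open Module

namespace LinearMap

section Splitting

variable {R V : Type*} [CommRing R] [AddCommGroup V] [Module R V]
  {B : V →ₗ[R] V →ₗ[R] R} {ξ η : V}

def pairOrthogonal (B : V →ₗ[R] V →ₗ[R] R) (ξ η : V) : Submodule R V :=
  ker (B ξ) ⊓ ker (B η)

theorem mem_pairOrthogonal {x : V} : x ∈ B.pairOrthogonal ξ η ↔ B ξ x = 0 ∧ B η x = 0 :=
  Iff.rfl

@[simp]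
theorem apply_coe_pairOrthogonal_left (u : B.pairOrthogonal ξ η) : B ξ u = 0 :=
  u.2.1

@[simp]
theorem apply_coe_pairOrthogonal_right (u : B.pairOrthogonal ξ η) : B η u = 0 :=
  u.2.2

namespace IsAlt

variable (hB : B.IsAlt) (h : B ξ η = 1)
include hB h

theorem apply_swap_eq_neg_one : B η ξ = -1 := by
  rw [← hB.neg, h]

def pairOrthogonalProj : V →ₗ[R] B.pairOrthogonal ξ η :=
  (id - (B ξ).smulRight η + (B η).smulRight ξ).codRestrict _ fun x ↦ by
    simp only [mem_pairOrthogonal, add_apply, sub_apply, id_apply, smulRight_apply, map_add,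
      map_sub, map_smul, smul_eq_mul, h, hB.apply_swap_eq_neg_one h, hB.self_eq_zero]
    constructor <;> ring

theorem coe_pairOrthogonalProj (x : V) :
    (hB.pairOrthogonalProj h x : V) = x - B ξ x • η + B η x • ξ :=
  rfl

def hyperbolicSplitting : V ≃ₗ[R] (R × R) × B.pairOrthogonal ξ η :=
  LinearEquiv.ofLinearMap (f := ((B ξ).prod (B η)).prod (hB.pairOrthogonalProj h))
    (g := (fst R R R ∘ₗ fst _ _ _).smulRight η - (snd R R R ∘ₗ fst _ _ _).smulRight ξ
      + (B.pairOrthogonal ξ η).subtype ∘ₗ snd _ _ _)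
    (by
      ext <;> simp [coe_pairOrthogonalProj, h, hB.apply_swap_eq_neg_one h, hB.self_eq_zero])
    (by ext x; simp [coe_pairOrthogonalProj])

@[simp]
theorem hyperbolicSplitting_apply_fst (x : V) :
    (hB.hyperbolicSplitting h x).1 = (B ξ x, B η x) :=
  rfl

theorem coe_hyperbolicSplitting_apply_snd (x : V) :
    ((hB.hyperbolicSplitting h x).2 : V) = x - B ξ x • η + B η x • ξ :=
  rfl

theorem hyperbolicSplitting_apply_coe (u : B.pairOrthogonal ξ η) :
    hB.hyperbolicSplitting h u = ((0, 0), u) := by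
  ext <;> simp [coe_hyperbolicSplitting_apply_snd]

theorem apply_eq_hyperbolicSplitting (x y : V) :
    let e := hB.hyperbolicSplitting h
    B x y = (e x).1.1 * (e y).1.2 - (e x).1.2 * (e y).1.1 + B (e x).2 (e y).2 := by
  simp only [hyperbolicSplitting_apply_fst, coe_hyperbolicSplitting_apply_snd, map_add, map_sub,
    map_smul, add_apply, sub_apply, smul_apply, smul_eq_mul, h, hB.apply_swap_eq_neg_one h,
    hB.self_eq_zero, ← hB.neg ξ x, ← hB.neg η x]
  ring

theorem separatingLeft_domRestrict₁₂_pairOrthogonal (hB' : B.SeparatingLeft) :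
    (B.domRestrict₁₂ (B.pairOrthogonal ξ η) (B.pairOrthogonal ξ η)).SeparatingLeft := by
  intro u hu
  refine Subtype.ext (hB' u fun x ↦ ?_)
  rw [hB.apply_eq_hyperbolicSplitting h, hyperbolicSplitting_apply_coe]
  simp only [zero_mul, sub_zero, zero_add]
  exact hu (hB.hyperbolicSplitting h x).2

theorem exists_isometry_of_pairOrthogonal {W : Type*} [AddCommGroup W] [Module R W]
    {C : W →ₗ[R] W →ₗ[R] R} {ξ' η' : W} (hC : C.IsAlt) (h' : C ξ' η' = 1)
    (e : B.pairOrthogonal ξ η ≃ₗ[R] C.pairOrthogonal ξ' η') (he : ∀ u v, C (e u) (e v) = B u v) :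
    ∃ f : V ≃ₗ[R] W, ∀ x y, C (f x) (f y) = B x y := by
  refine ⟨(hB.hyperbolicSplitting h).trans
    (((LinearEquiv.refl R (R × R)).prodCongr e).trans (hC.hyperbolicSplitting h').symm),
    fun x y ↦ ?_⟩
  rw [hC.apply_eq_hyperbolicSplitting h', hB.apply_eq_hyperbolicSplitting h x y]
  simp [he]

end IsAlt

end Splitting

section Field

variable {K V W : Type*} [Field K] [AddCommGroup V] [Module K V] [AddCommGroup W] [Module K W]
  {B : V →ₗ[K] V →ₗ[K] K} {C : W →ₗ[K] W →ₗ[K] K}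

theorem SeparatingLeft.exists_apply_eq_one [Nontrivial V] (hB : B.SeparatingLeft) :
    ∃ ξ η, B ξ η = 1 := by
  obtain ⟨ξ, hξ⟩ := exists_ne (0 : V)
  obtain ⟨y, hy⟩ : ∃ y, B ξ y ≠ 0 := by
    by_contra! hy
    exact hξ (hB ξ hy)
  exact ⟨ξ, (B ξ y)⁻¹ • y, by simp [hy]⟩

theorem IsAlt.finrank_pairOrthogonal_add_two [FiniteDimensional K V] {ξ η : V} (hB : B.IsAlt)
    (h : B ξ η = 1) : finrank K (B.pairOrthogonal ξ η) + 2 = finrank K V := by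
  rw [(hB.hyperbolicSplitting h).finrank_eq, finrank_prod, finrank_prod, finrank_self]
  ring

theorem IsAlt.exists_isometry_of_finrank_eq [FiniteDimensional K V] [FiniteDimensional K W]
    (hB : B.IsAlt) (hB' : B.SeparatingLeft) (hC : C.IsAlt) (hC' : C.SeparatingLeft)
    (hVW : finrank K V = finrank K W) : ∃ e : V ≃ₗ[K] W, ∀ x y, C (e x) (e y) = B x y := by
  obtain ⟨n, hn⟩ : ∃ n, finrank K V = n := ⟨_, rfl⟩
  induction n using Nat.strong_induction_on generalizing V W with
  | _ n ih =>
  rcases (finrank K V).eq_zero_or_pos with h0 | hpos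
  · have : Subsingleton V := finrank_zero_iff.mp h0
    have : Subsingleton W := finrank_zero_iff.mp (hVW ▸ h0)
    exact ⟨LinearEquiv.ofFinrankEq V W hVW, fun x y ↦ by simp [Subsingleton.elim x 0]⟩
  · have : Nontrivial V := finrank_pos_iff.mp hpos
    have : Nontrivial W := finrank_pos_iff.mp (hVW ▸ hpos)
    obtain ⟨ξ, η, h⟩ := hB'.exists_apply_eq_one
    obtain ⟨ξ', η', h'⟩ := hC'.exists_apply_eq_one
    have hU := hB.finrank_pairOrthogonal_add_two h
    have hU' := hC.finrank_pairOrthogonal_add_two h'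
    set U := B.pairOrthogonal ξ η
    set U' := C.pairOrthogonal ξ' η'
    obtain ⟨e, he⟩ := ih _ (by omega) (B := B.domRestrict₁₂ U U) (C := C.domRestrict₁₂ U' U')
      (fun u ↦ hB u) (hB.separatingLeft_domRestrict₁₂_pairOrthogonal h hB') (fun u ↦ hC u)
      (hC.separatingLeft_domRestrict₁₂_pairOrthogonal h' hC') (by omega) rfl
    exact hB.exists_isometry_of_pairOrthogonal h hC h' e he

end Field

section Adjoint

variable {R V : Type*} [CommRing R] [AddCommGroup V] [Module R V] {B : V →ₗ[R] V →ₗ[R] R}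

theorem IsAlt.isAdjointPair_symm {f g : V → V} (hB : B.IsAlt) (h : IsAdjointPair B B f g) :
    IsAdjointPair B B g f := fun x y ↦ by
  rw [← hB.neg, ← h, hB.neg]

theorem IsAlt.compl₂_of_isAdjointPair [NoZeroDivisors R] [CharZero R] {S : V →ₗ[R] V}
    (hB : B.IsAlt) (hS : IsAdjointPair B B S S) : (B.compl₂ S).IsAlt := fun x ↦ by
  have : B x (S x) = -B x (S x) := (hS x x).symm.trans (hB.neg _ _).symm
  exact CharZero.eq_neg_self_iff.mp this

theorem SeparatingLeft.compl₂_of_surjective {S : V →ₗ[R] V} (hB : B.SeparatingLeft)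
    (hS : Function.Surjective S) : (B.compl₂ S).SeparatingLeft := fun x hx ↦
  hB x fun y ↦ by
    obtain ⟨z, rfl⟩ := hS y
    exact hx z

end Adjoint

end LinearMap

open LinearMap

/-- For a linear isomorphism `S` of a finite-dimensional real symplectic
vector space `(W,σ)`, one has `S^σ = S` iff `S = φ^σ ∘ φ` for some linear isomorphism `φ`. -/
theorem selfadjoint_iff_adjoint_comp_factorization
    {W : Type*} [AddCommGroup W] [Module ℝ W] [FiniteDimensional ℝ W]
    (σ : W →ₗ[ℝ] W →ₗ[ℝ] ℝ)
    (halt : ∀ ξ η, σ ξ η = - σ η ξ)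
    (hnd : ∀ ξ, (∀ η, σ ξ η = 0) → ξ = 0)
    (S : W →ₗ[ℝ] W) (hS : Function.Bijective S)
    (Sσ : W →ₗ[ℝ] W)
    (hSσ : ∀ ξ η, σ (Sσ ξ) η = σ ξ (S η)) :
    Sσ = S ↔
      ∃ φ φs : W →ₗ[ℝ] W, Function.Bijective φ ∧
        (∀ ξ η, σ (φs ξ) η = σ ξ (φ η)) ∧ S = φs ∘ₗ φ := by
  have hσ : σ.IsAlt := isAlt_iff_eq_neg_flip.mpr (by ext ξ η; exact halt ξ η)
  have hσnd : σ.Nondegenerate := hσ.isRefl.nondegenerate_iff_separatingLeft.mpr hnd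
  constructor
  · rintro rfl
    obtain ⟨φ, hφ⟩ := (hσ.compl₂_of_isAdjointPair hSσ).exists_isometry_of_finrank_eq
      (SeparatingLeft.compl₂_of_surjective hnd hS.2) hσ hnd rfl
    have hadj := BilinForm.isAdjointPairLeftAdjointOfNondegenerate σ hσnd φ
    refine ⟨φ, _, φ.bijective, hadj,
      BilinForm.isAdjointPair_unique_of_nondegenerate σ hσnd Sσ _ _ hSσ fun x y ↦ ?_⟩
    rw [comp_apply, hadj]
    exact hφ x y
  · rintro ⟨φ, φs, -, hadj, rfl⟩
    exact BilinForm.isAdjointPair_unique_of_nondegenerate σ hσnd _ _ _ hSσ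
      ((hσ.isAdjointPair_symm hadj).comp hadj)
end

section
/- Let (W,σ) be a finite-dimensional real symplectic vector space and S : W → W a linear isomorphism with S^σ = S. Then det S > 0. -/
/-!
An invertible real matrix `A` with `0 ≤ v ⬝ᵥ (A *ᵥ v)` for all `v`, in particular an invertible
skew-symmetric one, is joined to the identity by the segment `(1 - t) • 1 + t • A` of invertible
matrices, so `det A > 0`. The Gram matrices of `σ` and of `σ (S ·) ·` are both invertible, and
skew because `S` is `σ`-self-adjoint. The second is `Aᵀ * M` for `A` the matrix of `S` and `M`
that of `σ`, hence `det S * det M > 0` with `det M > 0`.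
-/

open Matrix Set

theorem Matrix.det_pos_of_dotProduct_mulVec_self_nonneg {n : Type*} [Fintype n] [DecidableEq n]
    {A : Matrix n n ℝ} (hA : ∀ v, 0 ≤ v ⬝ᵥ (A *ᵥ v)) (hdet : A.det ≠ 0) : 0 < A.det := by
  set f : ℝ → ℝ := fun t ↦ ((1 - t) • (1 : Matrix n n ℝ) + t • A).det
  have hf : Continuous f := by fun_prop
  have hf_ne : ∀ t ∈ Icc (0 : ℝ) 1, f t ≠ 0 := by
    rintro t ⟨ht0, ht1⟩ hft
    rcases ht1.lt_or_eq with ht1 | rfl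
    · obtain ⟨v, hv, hv0⟩ := exists_mulVec_eq_zero_iff.mpr hft
      have hv_pos : 0 < v ⬝ᵥ v := dotProduct_self_star_pos_iff.mpr hv
      have hquad : v ⬝ᵥ (((1 - t) • (1 : Matrix n n ℝ) + t • A) *ᵥ v) =
          (1 - t) * (v ⬝ᵥ v) + t * (v ⬝ᵥ (A *ᵥ v)) := by
        simp [add_mulVec, smul_mulVec, dotProduct_add]
      rw [hv0, dotProduct_zero] at hquad
      nlinarith [hA v]
    · simp_all [f]
  by_contra! hneg
  obtain ⟨t, ht, hft⟩ := intermediate_value_Icc' zero_le_one hf.continuousOn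
    (show (0 : ℝ) ∈ Icc (f 1) (f 0) by simp [f, hneg])
  exact hf_ne t ht hft

theorem Matrix.det_pos_of_transpose_eq_neg {n : Type*} [Fintype n] [DecidableEq n]
    {J : Matrix n n ℝ} (hJ : Jᵀ = -J) (hdet : J.det ≠ 0) : 0 < J.det := by
  refine det_pos_of_dotProduct_mulVec_self_nonneg (fun v ↦ ?_) hdet
  have hzero : v ⬝ᵥ (J *ᵥ v) = -((J *ᵥ v) ⬝ᵥ v) := by
    rw [dotProduct_mulVec, ← mulVec_transpose, hJ, neg_mulVec, neg_dotProduct]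
  rw [dotProduct_comm (J *ᵥ v)] at hzero
  linarith

namespace LinearMap.BilinForm

theorem det_toMatrix_pos_of_skew {W ι : Type*} [AddCommGroup W] [Module ℝ W] [Fintype ι]
    [DecidableEq ι] (b : Module.Basis ι ℝ W) {B : LinearMap.BilinForm ℝ W}
    (hskew : ∀ x y, B x y = -B y x) (hB : B.SeparatingLeft) : 0 < (toMatrix b B).det := by
  have hrefl : B.IsRefl := fun x y hxy ↦ by rw [hskew, hxy, neg_zero]
  refine Matrix.det_pos_of_transpose_eq_neg ?_ ?_
  · ext i j
    simp only [Matrix.transpose_apply, Matrix.neg_apply, toMatrix_apply]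
    exact hskew (b j) (b i)
  · exact (nondegenerate_iff_det_ne_zero b).mp (hrefl.nondegenerate_iff_separatingLeft.mpr hB)

end LinearMap.BilinForm

open LinearMap.BilinForm in
/-- If `S` is a linear isomorphism of a finite-dimensional real symplectic
vector space `(W,σ)` with `S^σ = S` (i.e. `σ(Sξ,η) = σ(ξ,Sη)` for all `ξ,η`),
then `det S > 0`. -/
theorem det_pos_of_symplectic_selfadjoint
    {W : Type*} [AddCommGroup W] [Module ℝ W] [FiniteDimensional ℝ W]
    (σ : W →ₗ[ℝ] W →ₗ[ℝ] ℝ)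
    (halt : ∀ ξ η, σ ξ η = - σ η ξ)
    (hnd : ∀ ξ, (∀ η, σ ξ η = 0) → ξ = 0)
    (S : W →ₗ[ℝ] W) (hS : Function.Bijective S)
    (hself : ∀ ξ η, σ (S ξ) η = σ ξ (S η)) :
    0 < LinearMap.det S := by
  let b := Module.finBasis ℝ W
  have hσ_pos : 0 < (toMatrix b σ).det := det_toMatrix_pos_of_skew b halt hnd
  have hσS_skew : ∀ ξ η, compLeft σ S ξ η = -compLeft σ S η ξ := fun ξ η ↦ by
    simp only [compLeft_apply, hself ξ η, halt ξ]
  have hσS_sep : (compLeft σ S).SeparatingLeft := fun ξ hξ ↦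
    (injective_iff_map_eq_zero S).mp hS.1 ξ (hnd (S ξ) hξ)
  have hσS_pos := det_toMatrix_pos_of_skew b hσS_skew hσS_sep
  rw [toMatrix_compLeft, Matrix.det_mul, Matrix.det_transpose, LinearMap.det_toMatrix] at hσS_pos
  exact pos_of_mul_pos_left hσS_pos hσ_pos.le
end

section
/- Let g : (0,∞) → ℂ and k : ℝⁿ → (0,∞) be C^r maps such that (a) for each j ≤ r there is C_{g,j} > 0 with t^j |g^{(j)}(t)| ≤ C_{g,j} |g(t)| for all t > 0, and (b) for each multi-index α with |α| ≤ r there is C_{k,α} > 0 with |∂^α k(x)| ≤ C_{k,α} k(x) for all x ∈ ℝⁿ. Then for each multi-index α with |α| ≤ r there is C_{g,k,α} > 0 such that |∂^α (g ∘ k)(x)| ≤ C_{g,k,α} |g(k(x))| for all x ∈ ℝⁿ. -/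
/-!
Fix `x` and put `c = k x`. Then `g ∘ k = g (c * ·) ∘ (c⁻¹ * k)`: the inner map takes the value `1`
at `x` and its derivatives there are bounded by the relative constants of `k`, while the `i`-th
derivative of `g (c * ·)` at `1` is `c ^ i * g⁽ⁱ⁾ c`, bounded by a constant times `‖g c‖`.
Mathlib's Faà di Bruno bound `norm_iteratedFDeriv_comp_le'` applies to this factorisation.
-/

open Set Filter Nat

theorem exists_pos_forall_le_of_monotone {r : ℕ} {P : ℕ → ℝ → Prop} (hP : ∀ j, Monotone (P j))
    (h : ∀ j ≤ r, ∃ C, P j C) : ∃ C > 0, ∀ j ≤ r, P j C := by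
  have hev : ∀ᶠ C in atTop, ∀ j ∈ Iic r, P j C :=
    (eventually_all_finite (finite_Iic r)).2 fun j hj =>
      let ⟨C, hC⟩ := h j hj
      (eventually_ge_atTop C).mono fun _ hC' => hP j hC' hC
  obtain ⟨C, hC, hpos⟩ := (hev.and (eventually_gt_atTop 0)).exists
  exact ⟨C, hpos, hC⟩

theorem norm_iteratedFDerivWithin_comp_const_mul {𝕜 F : Type*} [NontriviallyNormedField 𝕜]
    [NormedAddCommGroup F] [NormedSpace 𝕜 F] {f : 𝕜 → F} {s : Set 𝕜} {n : ℕ} {x : 𝕜}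
    (hf : ContDiffOn 𝕜 n f s) (hs : UniqueDiffOn 𝕜 s) (hx : x ∈ s) (c : 𝕜)
    (hcs : MapsTo (c * ·) s s) :
    ‖iteratedFDerivWithin 𝕜 n (fun y => f (c * y)) s x‖ =
      ‖c‖ ^ n * ‖iteratedDerivWithin n f s (c * x)‖ := by
  rw [norm_iteratedFDerivWithin_eq_norm_iteratedDerivWithin,
    iteratedDerivWithin_comp_const_smul hx hs hf c hcs, norm_smul, norm_pow]

theorem norm_iteratedFDeriv_comp_le_of_relative_bounds {E F : Type*} [NormedAddCommGroup E]
    [NormedSpace ℝ E] [NormedAddCommGroup F] [NormedSpace ℝ F] {g : ℝ → F} {k : E → ℝ} {n : ℕ}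
    (hg : ContDiffOn ℝ n g (Ioi 0)) (hk : ContDiff ℝ n k) (hkpos : ∀ y, 0 < k y) (x : E)
    {C D : ℝ} (hC : ∀ i ≤ n, k x ^ i * ‖iteratedDerivWithin i g (Ioi 0) (k x)‖ ≤ C)
    (hD : ∀ i, 1 ≤ i → i ≤ n → ‖iteratedFDeriv ℝ i k x‖ ≤ D ^ i * k x) :
    ‖iteratedFDeriv ℝ n (g ∘ k) x‖ ≤ n ! * C * D ^ n := by
  set c := k x
  have hc : 0 < c := hkpos x
  have hmaps : MapsTo (c * ·) (Ioi (0 : ℝ)) (Ioi 0) := fun _ ht => mul_pos hc ht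
  have hcomp : g ∘ k = (fun t => g (c * t)) ∘ fun y => c⁻¹ • k y := by
    ext y
    simp [mul_inv_cancel_left₀ hc.ne']
  have hgc : ContDiffOn ℝ n (fun t => g (c * t)) (Ioi 0) :=
    hg.comp (contDiffOn_const.mul contDiffOn_id) hmaps
  rw [hcomp]
  refine norm_iteratedFDeriv_comp_le' (t := Ioi 0) ?_ (uniqueDiffOn_Ioi 0) hgc
    (hk.const_smul c⁻¹) le_rfl x ?_ ?_
  · rintro _ ⟨y, rfl⟩
    exact smul_pos (inv_pos.2 hc) (hkpos y)
  · intro i hi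
    rw [smul_eq_mul, inv_mul_cancel₀ hc.ne', norm_iteratedFDerivWithin_comp_const_mul
      (hg.of_le (by exact_mod_cast hi)) (uniqueDiffOn_Ioi 0) (mem_Ioi.2 one_pos) c hmaps, mul_one,
      Real.norm_of_nonneg hc.le]
    exact hC i hi
  · intro i h1 hi
    rw [iteratedFDeriv_const_smul_apply' (hk.of_le (by exact_mod_cast hi)).contDiffAt, norm_smul,
      norm_inv, Real.norm_of_nonneg hc.le, inv_mul_le_iff₀ hc, mul_comm]
    exact hD i h1 hi

/-- If `g : (0,∞) → ℂ` satisfies `t^j |g^{(j)}(t)| ≤ C_{g,j} |g(t)|` for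
`j ≤ r` and `k : ℝⁿ → (0,∞)` satisfies `‖∂^α k(x)‖ ≤ C_{k,α} k(x)` for `|α| ≤ r`, then
each derivative of order `≤ r` of `g ∘ k` is bounded by a constant times `|g(k(x))|`. -/
theorem faa_di_bruno_weight_estimate
    {n : ℕ} (r : ℕ) (g : ℝ → ℂ) (k : (Fin n → ℝ) → ℝ)
    (hg : ContDiffOn ℝ r g (Set.Ioi 0))
    (hk : ContDiff ℝ r k)
    (hkpos : ∀ x, 0 < k x)
    (hgj : ∀ j ≤ r, ∃ C > 0, ∀ t > (0 : ℝ),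
      t ^ j * ‖iteratedDerivWithin j g (Set.Ioi 0) t‖ ≤ C * ‖g t‖)
    (hkj : ∀ j ≤ r, ∃ C > 0, ∀ x, ‖iteratedFDeriv ℝ j k x‖ ≤ C * k x) :
    ∀ j ≤ r, ∃ C > 0, ∀ x,
      ‖iteratedFDeriv ℝ j (fun x => g (k x)) x‖ ≤ C * ‖g (k x)‖ := by
  obtain ⟨A, hA, hgA⟩ := exists_pos_forall_le_of_monotone
    (P := fun j C => ∀ t > (0 : ℝ), t ^ j * ‖iteratedDerivWithin j g (Ioi 0) t‖ ≤ C * ‖g t‖)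
    (fun _ _ _ hC hP t ht => (hP t ht).trans (by gcongr))
    fun j hj => (hgj j hj).imp fun _ => And.right
  obtain ⟨B, -, hkB⟩ := exists_pos_forall_le_of_monotone
    (P := fun j C => ∀ x, ‖iteratedFDeriv ℝ j k x‖ ≤ C * k x)
    (fun _ _ _ hC hP x => (hP x).trans (by gcongr; exact (hkpos x).le))
    fun j hj => (hkj j hj).imp fun _ => And.right
  set D := max B 1
  intro j hj
  refine ⟨j ! * A * D ^ j, by positivity, fun x => ?_⟩
  have hbound := norm_iteratedFDeriv_comp_le_of_relative_bounds (hg.of_le (by exact_mod_cast hj))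
    (hk.of_le (by exact_mod_cast hj)) hkpos x (C := A * ‖g (k x)‖) (D := D)
    (fun i hi => hgA i (hi.trans hj) (k x) (hkpos x))
    (fun i h1 hi => (hkB i (hi.trans hj) x).trans <| by
      gcongr
      · exact (hkpos x).le
      · exact (le_max_left B 1).trans (le_self_pow₀ (le_max_right B 1) (by omega)))
  calc ‖iteratedFDeriv ℝ j (fun x => g (k x)) x‖ ≤ j ! * (A * ‖g (k x)‖) * D ^ j := hbound
    _ = j ! * A * D ^ j * ‖g (k x)‖ := by ring
end
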